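/- arXiv:2307.07185 — 3 statements merged into one kernel-verified Lean document; each statement's English description precedes it below -/
import Mathlib

section
/- Let X be a real normed vector space and K ⊆ X a closed, convex, pointed cone. Suppose A, B, C, D ⊆ X are nonempty sets, D is weakly K-compact, B is open in the norm topology, and A + C ⊆ D + B + K. Then A + (C ∸ D) ⊆ conv B + K, where C ∸ D = {x ∈ X : x + D ⊆ C} is the star (Pontryagin) difference. -/
open Set Filter Topology Metric Pointwise

/-- A set is weakly open if it is open in the weak topology σ(X, X*). -/
def WeaklyOpen {X : Type*} [NormedAddCommGroup X] [NormedSpace ℝ X] (U : Set X) : Prop :=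
  IsOpen ((toWeakSpace ℝ X) '' U)

/-- `S` is weakly `K`-compact: every cover of `S` by sets `U + K` with `U` weakly open
admits a finite subcover. -/
def WeaklyKCompact {X : Type*} [NormedAddCommGroup X] [NormedSpace ℝ X] (K S : Set X) : Prop :=
  ∀ {ι : Type*} (U : ι → Set X), (∀ i, WeaklyOpen (U i)) → S ⊆ ⋃ i, (U i + K) →
    ∃ t : Finset ι, S ⊆ ⋃ i ∈ t, (U i + K)

/-- The star (Pontryagin) difference: `C ∸ D = {x | x + D ⊆ C}`. -/
def starDiff {X : Type*} [AddCommGroup X] (C D : Set X) : Set X := {x | ∀ d ∈ D, x + d ∈ C}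

lemma weaklyOpen_Ioi {X : Type*} [NormedAddCommGroup X] [NormedSpace ℝ X]
    (f : X →L[ℝ] ℝ) (c : ℝ) : WeaklyOpen (f ⁻¹' Set.Ioi c) := by
  unfold WeaklyOpen
  have hc : Continuous fun y : WeakSpace ℝ X => f ((toWeakSpace ℝ X).symm y) :=
    WeakBilin.eval_continuous (topDualPairing ℝ X).flip f
  have : (toWeakSpace ℝ X) '' (f ⁻¹' Set.Ioi c)
      = (fun y : WeakSpace ℝ X => f ((toWeakSpace ℝ X).symm y)) ⁻¹' Set.Ioi c := by
    ext y
    constructor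
    · rintro ⟨x, hx, rfl⟩
      simpa using hx
    · intro hy
      exact ⟨(toWeakSpace ℝ X).symm y, hy, by simp⟩
  rw [this]
  exact hc.isOpen_preimage _ isOpen_Ioi

/-- Conic cancellation law with star difference (Proposition 10). -/
theorem conic_cancellation_starDiff {X : Type*} [NormedAddCommGroup X] [NormedSpace ℝ X]
    (K A B C D : Set X)
    (hK_closed : IsClosed K) (hK_conv : Convex ℝ K)
    (hK_cone : ∀ t : ℝ, 0 ≤ t → ∀ x ∈ K, t • x ∈ K)
    (hK_add : K + K ⊆ K) (hK_pointed : K ∩ (-K) = {0})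
    (hA : A.Nonempty) (hB : B.Nonempty) (hC : C.Nonempty) (hD : D.Nonempty)
    (hDcomp : WeaklyKCompact K D)
    (hBopen : IsOpen B)
    (h : A + C ⊆ D + B + K) :
    A + starDiff C D ⊆ convexHull ℝ B + K := by
  have h0K : (0 : X) ∈ K := by
    have : (0 : X) ∈ ({0} : Set X) := rfl
    rw [← hK_pointed] at this
    exact this.1
  rintro p ⟨a, ha, x, hx, rfl⟩
  show a + x ∈ convexHull ℝ B + K
  set z := a + x with hz
  clear_value z
  -- z + d ∈ D + B + K for all d ∈ D
  have hzd : ∀ d ∈ D, z + d ∈ D + B + K := by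
    intro d hd
    have hxd : x + d ∈ C := hx d hd
    have : a + (x + d) ∈ A + C := ⟨a, ha, x + d, hxd, rfl⟩
    have := h this
    rwa [show a + (x + d) = z + d by rw [hz]; abel] at this
  set S : Set X := convexHull ℝ B + K with hS
  by_contra hzS
  have hSconv : Convex ℝ S := (convex_convexHull ℝ B).add hK_conv
  have hBKS : B + K ⊆ S := Set.add_subset_add_right (subset_convexHull ℝ B)
  have hBKopen : IsOpen (B + K) := hBopen.add_right
  have hBKint : B + K ⊆ interior S := interior_maximal hBKS hBKopen
  have hzint : z ∉ interior S := fun hzi => hzS (interior_subset hzi)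
  obtain ⟨f, hf⟩ := geometric_hahn_banach_point_open hSconv.interior isOpen_interior hzint
  -- f z < f b + f k for b ∈ B, k ∈ K
  have hflt : ∀ b ∈ B, ∀ k ∈ K, f z < f b + f k := by
    intro b hb k hk
    have : b + k ∈ interior S := hBKint ⟨b, hb, k, hk, rfl⟩
    have := hf _ this
    rwa [map_add] at this
  obtain ⟨b₀, hb₀⟩ := hB
  -- f ≥ 0 on K
  have hfK : ∀ k ∈ K, 0 ≤ f k := by
    intro k hk
    by_contra hneg
    push_neg at hneg
    set t : ℝ := (f b₀ - f z + 1) / (-f k) with ht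
    have htpos : 0 ≤ t := by
      apply div_nonneg
      · have := hflt b₀ hb₀ 0 h0K
        simp only [map_zero, add_zero] at this
        linarith
      · linarith
    have htk : t • k ∈ K := hK_cone t htpos k hk
    have := hflt b₀ hb₀ (t • k) htk
    rw [map_smul, smul_eq_mul] at this
    have hfk0 : f k ≠ 0 := by linarith
    have : f z < f b₀ + (f b₀ - f z + 1) / (-f k) * f k := this
    rw [div_mul_eq_mul_div, mul_comm, ← div_mul_eq_mul_div, div_neg, div_self hfk0] at this
    linarith
  -- for each d ∈ D there is d' ∈ D with f d' < f d
  have hstep : ∀ d ∈ D, ∃ e ∈ D, f e < f d := by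
    intro d hd
    obtain ⟨w, ⟨e, he, b, hb, rfl⟩, k, hk, hsum⟩ := hzd d hd
    refine ⟨e, he, ?_⟩
    have h1 : f e + f b + f k = f z + f d := by
      have := congrArg f hsum
      simpa [map_add] using this
    have h2 := hflt b hb k hk
    linarith
  choose g hg1 hg2 using hstep
  classical
  set P : ℝ → Prop := fun r => ∃ d, ∃ hd : d ∈ D, f (g d hd) = r with hP
  obtain ⟨t, hsub⟩ := hDcomp
    (fun r : ULift ℝ => if P r.down then f ⁻¹' Set.Ioi r.down else (∅ : Set X))
    (by
      intro r
      beta_reduce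
      by_cases hr : P r.down
      · rw [if_pos hr]; exact weaklyOpen_Ioi f _
      · rw [if_neg hr]
        unfold WeaklyOpen
        simp)
    (by
      intro d hd
      refine Set.mem_iUnion.2 ⟨⟨f (g d hd)⟩, ?_⟩
      beta_reduce
      rw [if_pos ⟨d, hd, rfl⟩]
      exact ⟨d, hg2 d hd, 0, h0K, add_zero d⟩)
  set t' := t.filter (fun r => P r.down) with ht'
  obtain ⟨d₀, hd₀⟩ := hD
  have hmem : ∀ e ∈ D, ∃ r ∈ t', ∃ u, f u ∈ Set.Ioi r.down ∧ ∃ k ∈ K, u + k = e := by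
    intro e he
    have := hsub he
    rw [Set.mem_iUnion₂] at this
    obtain ⟨r, hrt, hre⟩ := this
    beta_reduce at hre
    by_cases hr : P r.down
    · rw [if_pos hr] at hre
      obtain ⟨u, hu, k, hk, hsum⟩ := hre
      exact ⟨r, Finset.mem_filter.2 ⟨hrt, hr⟩, u, hu, k, hk, hsum⟩
    · rw [if_neg hr] at hre
      obtain ⟨u, hu, -⟩ := hre
      exact absurd hu (Set.notMem_empty u)
  have ht'ne : (t'.image fun r => r.down).Nonempty := by
    obtain ⟨r, hrt, -⟩ := hmem d₀ hd₀
    exact ⟨r.down, Finset.mem_image_of_mem _ hrt⟩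
  set c : ℝ := (t'.image fun r => r.down).min' ht'ne with hc
  obtain ⟨r₀, hr₀t, hr₀⟩ := Finset.mem_image.1 ((t'.image fun r => r.down).min'_mem ht'ne)
  obtain ⟨d', hd', hfd'⟩ : P c := by
    have := (Finset.mem_filter.1 hr₀t).2
    rwa [hr₀] at this
  obtain ⟨r, hrt', u, hu, k, hk, hsum⟩ := hmem (g d' hd') (hg1 d' hd')
  have h1 : r.down < f u := hu
  have h2 : c ≤ r.down := Finset.min'_le _ _ (Finset.mem_image_of_mem _ hrt')
  have h3 : f u + f k = f (g d' hd') := by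
    have := congrArg f hsum
    simpa [map_add] using this
  have h4 := hfK k hk
  rw [hfd'] at h3
  linarith
end

section
/- Let Z and X be real normed vector spaces, K ⊆ X a closed, convex, pointed cone, and F : Z ⇒ X a set-valued map with nonempty weakly K-compact values. Suppose K is normal with constant α > 0 (i.e., ‖z‖ ≤ α‖y‖ whenever z, y ∈ K and y − z ∈ K), and F is K-Lipschitz around z̄ ∈ Z with constant ℓ > 0 and element e ∈ S_X ∩ K: there is a neighborhood U of z̄ such that F(z'') + ℓ‖z'' − z'‖ e ⊆ F(z') + K for all z', z'' ∈ U. Then for every T in the Fréchet subdifferential ∂̂F(z̄) and every u in the unit sphere S_Z with T(u) ∈ K ∪ (−K), one has ‖T(u)‖ ≤ αℓ‖e‖. -/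
open Set Filter Topology Metric Pointwise
open scoped ENNReal

/-- The excess `e(A, B) = sup_{x ∈ A} d(x, B)`, valued in `[0, ∞]`. -/
noncomputable def excess {Y : Type*} [SeminormedAddCommGroup Y] (A B : Set Y) : ℝ≥0∞ :=
  ⨆ x ∈ A, EMetric.infEdist x B

/-- The Fréchet subdifferential of a set-valued map `F` at `zb`, defined via the
epigraphical map `Epi F(z) = F(z) + K`. -/
noncomputable def frechetSubdiff {Z X : Type*} [NormedAddCommGroup Z] [NormedSpace ℝ Z]
    [NormedAddCommGroup X] [NormedSpace ℝ X] (K : Set X) (F : Z → Set X) (zb : Z) :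
    Set (Z →L[ℝ] X) :=
  {T | Tendsto (fun z => excess (F z + K) (F zb + K + {T (z - zb)}) / ENNReal.ofReal ‖z - zb‖)
      (𝓝[≠] zb) (𝓝 0)}

lemma weaklyOpen_preimage' {X : Type*} [NormedAddCommGroup X] [NormedSpace ℝ X]
    (f : X →L[ℝ] ℝ) {s : Set ℝ} (hs : IsOpen s) : WeaklyOpen (f ⁻¹' s) := by
  unfold WeaklyOpen
  rw [LinearEquiv.image_eq_preimage_symm]
  exact hs.preimage (WeakBilin.eval_continuous _ f)

lemma bdd_of_wkc {X : Type*} [NormedAddCommGroup X] [NormedSpace ℝ X]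
    {K S : Set X} (hS : WeaklyKCompact K S) (f : X →L[ℝ] ℝ)
    (hfK : ∀ k ∈ K, f k ≤ 0) (h0 : (0:X) ∈ K) :
    ∃ N : ℝ, ∀ x ∈ S, f x < N := by
  have hcov : S ⊆ ⋃ n : ULift.{_} ℕ, ((f ⁻¹' Iio (n.down : ℝ)) + K) := by
    intro x hx
    refine mem_iUnion.2 ⟨ULift.up (⌈f x⌉₊ + 1), ?_⟩
    refine ⟨x, ?_, 0, h0, add_zero x⟩
    have h1 := Nat.le_ceil (f x)
    simp only [mem_preimage, mem_Iio, ULift.up_down]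
    push_cast
    linarith
  obtain ⟨t, ht⟩ := hS (fun n : ULift ℕ => f ⁻¹' Iio (n.down : ℝ))
    (fun n => weaklyOpen_preimage' f isOpen_Iio) hcov
  refine ⟨(t.sup (fun n => n.down) : ℕ) + 1, fun x hx => ?_⟩
  obtain ⟨i, hit, hxU⟩ := mem_iUnion₂.1 (ht hx)
  obtain ⟨a, ha, k, hk, rfl⟩ := hxU
  have h1 : f a < i.down := ha
  have h2 : f k ≤ 0 := hfK k hk
  have h3 : (i.down : ℝ) ≤ (t.sup (fun n => n.down) : ℕ) := by
    exact_mod_cast Finset.le_sup (f := fun n : ULift ℕ => n.down) hit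
  have h4 : f (a + k) = f a + f k := map_add f a k
  linarith

/-- Bound on Fréchet subgradients of a `K`-Lipschitz set-valued map when `K` is normal
(Proposition 32). -/
theorem frechetSubdiff_bound_of_K_Lipschitz {Z X : Type*} [NormedAddCommGroup Z]
    [NormedSpace ℝ Z] [NormedAddCommGroup X] [NormedSpace ℝ X]
    (K : Set X)
    (hK_closed : IsClosed K) (hK_conv : Convex ℝ K)
    (hK_cone : ∀ t : ℝ, 0 ≤ t → ∀ x ∈ K, t • x ∈ K)
    (hK_add : K + K ⊆ K) (hK_pointed : K ∩ (-K) = {0})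
    (α : ℝ) (hα : 0 < α)
    (hK_normal : ∀ z y : X, z ∈ K → y ∈ K → y - z ∈ K → ‖z‖ ≤ α * ‖y‖)
    (F : Z → Set X) (hF : ∀ z, (F z).Nonempty) (hFcomp : ∀ z, WeaklyKCompact K (F z))
    (zb : Z) (ℓ : ℝ) (hℓ : 0 < ℓ) (e : X) (he : ‖e‖ = 1 ∧ e ∈ K)
    (hLip : ∃ U ∈ 𝓝 zb, ∀ z' ∈ U, ∀ z'' ∈ U,
      F z'' + {(ℓ * ‖z'' - z'‖) • e} ⊆ F z' + K) :
    ∀ T ∈ frechetSubdiff K F zb, ∀ u : Z, ‖u‖ = 1 → T u ∈ K ∪ (-K) →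
      ‖T u‖ ≤ α * ℓ * ‖e‖ := by
  intro T hT u hu huK
  have h0K : (0:X) ∈ K := by
    have : (0:X) ∈ ({0} : Set X) := rfl
    rw [← hK_pointed] at this
    exact this.1
  obtain ⟨U, hU, hLip'⟩ := hLip
  -- key claim
  have key : ∀ v : Z, ‖v‖ = 1 → ℓ • e - T v ∈ K := by
    intro v hv
    by_contra hnotin
    obtain ⟨f, u₀, hfu, hu₀⟩ := geometric_hahn_banach_closed_point hK_conv hK_closed hnotin
    have hfK : ∀ k ∈ K, f k ≤ 0 := by
      intro k hk
      by_contra hpos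
      push_neg at hpos
      obtain ⟨n, hn⟩ := exists_nat_gt (u₀ / f k)
      have hmem : (n : ℝ) • k ∈ K := hK_cone n (by positivity) k hk
      have h1 : f ((n:ℝ) • k) < u₀ := hfu _ hmem
      rw [map_smul, smul_eq_mul] at h1
      have h2 : u₀ / f k < n := hn
      rw [div_lt_iff₀ hpos] at h2
      linarith
    have hu₀pos : 0 < u₀ := by
      have := hfu 0 h0K
      simpa using this
    set c := f (ℓ • e - T v) with hc_def
    have hc : 0 < c := lt_trans hu₀pos hu₀
    have hc_eq : c = ℓ * f e - f (T v) := by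
      rw [hc_def, map_sub, map_smul, smul_eq_mul]
    set ε := c / (4 * (‖f‖ + 1)) with hε_def
    have hεpos : 0 < ε := by positivity
    have hεf : ‖f‖ * ε ≤ c / 2 := by
      rw [hε_def]
      rw [mul_div_assoc'] -- ‖f‖ * (c / _) = ‖f‖ * c / _
      rw [div_le_div_iff₀ (by positivity) (by norm_num)]
      nlinarith [norm_nonneg f, hc.le]
    obtain ⟨N, hN⟩ := bdd_of_wkc (hFcomp zb) f hfK h0K
    -- eventually
    have hev : ∀ᶠ z in 𝓝[≠] zb,
        (excess (F z + K) (F zb + K + {T (z - zb)}) / ENNReal.ofReal ‖z - zb‖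
          < ENNReal.ofReal ε) ∧ z ∈ U := by
      refine (hT.eventually_lt_const ?_).and ?_
      · exact ENNReal.ofReal_pos.2 hεpos
      · exact eventually_nhdsWithin_of_eventually_nhds hU
    obtain ⟨δ, hδpos, hδ⟩ := Metric.mem_nhdsWithin_iff.1 hev
    set t := δ / 2 with ht_def
    have htpos : 0 < t := by positivity
    set z := zb + t • v with hz_def
    have hznorm : ‖z - zb‖ = t := by
      rw [hz_def, add_sub_cancel_left, norm_smul, hv, Real.norm_eq_abs,
        abs_of_pos htpos, mul_one]
    have hzne : z ≠ zb := by
      intro h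
      rw [h] at hznorm
      simp at hznorm
      linarith
    have hzS : z ∈ Metric.ball zb δ ∩ {zb}ᶜ := by
      constructor
      · rw [Metric.mem_ball, dist_eq_norm, hznorm, ht_def]; linarith
      · exact hzne
    obtain ⟨hexc, hzU⟩ := hδ hzS
    have hzbU : zb ∈ U := mem_of_mem_nhds hU
    have hnorm2 : ‖zb - z‖ = t := by
      rw [← neg_sub, norm_neg, hznorm]
    -- excess bound
    have hlt : excess (F z + K) (F zb + K + {T (z - zb)}) < ENNReal.ofReal (ε * t) := by
      have := (ENNReal.div_lt_iff (Or.inl ?_) (Or.inl ?_)).1 hexc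
      · rw [hznorm] at this
        rwa [ENNReal.ofReal_mul hεpos.le] 
      · rw [hznorm]
        exact (ENNReal.ofReal_pos.2 htpos).ne'
      · exact ENNReal.ofReal_ne_top
    -- step
    have hstep : ∀ x ∈ F zb, ∃ a ∈ F zb, f x + t * (c / 2) ≤ f a := by
      intro x hx
      have hmem : x + (ℓ * ‖zb - z‖) • e ∈ F z + K :=
        hLip' z hzU zb hzbU ⟨x, hx, _, rfl, rfl⟩
      have hinf : EMetric.infEdist (x + (ℓ * ‖zb - z‖) • e) (F zb + K + {T (z - zb)})
          < ENNReal.ofReal (ε * t) :=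
        lt_of_le_of_lt (le_iSup₂ (f := fun y (_ : y ∈ F z + K) =>
          EMetric.infEdist y (F zb + K + {T (z - zb)})) _ hmem) hlt
      obtain ⟨w, hwB, hw⟩ := EMetric.infEdist_lt_iff.1 hinf
      have hdist : dist (x + (ℓ * ‖zb - z‖) • e) w < ε * t := by
        rw [edist_dist] at hw
        exact (ENNReal.ofReal_lt_ofReal_iff (by positivity)).1 hw
      obtain ⟨p, hp, q, hq, rfl⟩ := hwB
      obtain ⟨a, ha, k, hk, rfl⟩ := hp
      rw [mem_singleton_iff] at hq
      subst hq
      refine ⟨a, ha, ?_⟩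
      have hTz : f (T (z - zb)) = t * f (T v) := by
        rw [hz_def, add_sub_cancel_left, map_smul, map_smul, smul_eq_mul]
      have hAeq : f (x + (ℓ * ‖zb - z‖) • e) = f x + ℓ * t * f e := by
        rw [map_add, map_smul, smul_eq_mul, hnorm2]
      have hweq : f (a + k + T (z - zb)) = f a + f k + t * f (T v) := by
        rw [map_add, map_add, hTz]
      have hfk : f k ≤ 0 := hfK k hk
      have habs : f (x + (ℓ * ‖zb - z‖) • e) - f (a + k + T (z - zb))
          ≤ ‖f‖ * (ε * t) := by
        have h1 : f (x + (ℓ * ‖zb - z‖) • e) - f (a + k + T (z - zb))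
            = f ((x + (ℓ * ‖zb - z‖) • e) - (a + k + T (z - zb))) :=
          (map_sub f _ _).symm
        rw [h1]
        calc f _ ≤ |f _| := le_abs_self _
          _ ≤ ‖f‖ * ‖(x + (ℓ * ‖zb - z‖) • e) - (a + k + T (z - zb))‖ := by
              rw [← Real.norm_eq_abs]; exact f.le_opNorm _
          _ ≤ ‖f‖ * (ε * t) := by
              apply mul_le_mul_of_nonneg_left _ (norm_nonneg f)
              rw [← dist_eq_norm]
              exact hdist.le
      have hεft : ‖f‖ * (ε * t) ≤ (c / 2) * t := by
        rw [← mul_assoc]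
        exact mul_le_mul_of_nonneg_right hεf htpos.le
      nlinarith [habs, hweq, hAeq, hfk, hc_eq, htpos]
    -- iterate
    obtain ⟨x₀, hx₀⟩ := hF zb
    have hiter : ∀ n : ℕ, ∃ a ∈ F zb, f x₀ + n * (t * (c / 2)) ≤ f a := by
      intro n
      induction n with
      | zero => exact ⟨x₀, hx₀, by simp⟩
      | succ n ih =>
        obtain ⟨a, ha, hle⟩ := ih
        obtain ⟨b, hb, hstep'⟩ := hstep a ha
        refine ⟨b, hb, ?_⟩
        push_cast
        linarith
    obtain ⟨n, hn⟩ := exists_nat_gt ((N - f x₀) / (t * (c / 2)))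
    have htc : 0 < t * (c / 2) := by positivity
    rw [div_lt_iff₀ htc] at hn
    obtain ⟨a, ha, hle⟩ := hiter n
    have := hN a ha
    linarith
  -- conclude
  have hℓe : ℓ • e ∈ K := hK_cone ℓ hℓ.le e he.2
  have hnℓe : ‖ℓ • e‖ = ℓ := by
    rw [norm_smul, Real.norm_eq_abs, abs_of_pos hℓ, he.1, mul_one]
  rw [he.1, mul_one]
  rcases huK with hTu | hTu
  · have h1 := key u hu
    have := hK_normal (T u) (ℓ • e) hTu hℓe h1
    rwa [hnℓe] at this
  · have hnu : ‖-u‖ = 1 := by rw [norm_neg, hu]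
    have h1 := key (-u) hnu
    rw [map_neg, sub_neg_eq_add] at h1
    have hTuK : -T u ∈ K := Set.mem_neg.1 hTu
    have h2 : ℓ • e - (- T u) ∈ K := by rwa [sub_neg_eq_add]
    have := hK_normal (-T u) (ℓ • e) hTuK hℓe h2
    rwa [hnℓe, norm_neg] at this
end

section
/- Let Z and X be real normed vector spaces, K ⊆ X a closed, convex, pointed cone with nonempty interior, F, H : Z ⇒ X set-valued maps with nonempty values, M ⊆ Z a nonempty closed set, e ∈ int K, μ > 0, L ∈ (0, μ), and ε > 0. Suppose there exist z̄, z_ε ∈ M such that for all z ∈ M: (i) F(z̄) ⊄ F(z) − μ‖z − z̄‖ e + int K; (ii) H(z) + L‖z − z̄‖ e ⊆ H(z̄) + K; (iii) F(z) + H(z) ⊆ F(z_ε) + H(z_ε) − ε e + K. If moreover F(z_ε) is K-convex and H(z̄) is weakly K-compact, then ‖z_ε − z̄‖ ≤ ε / (μ − L). -/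
open Set Filter Topology Metric Pointwise

/-- Sublevel-type sets of a continuous linear functional are weakly open. -/
lemma weaklyOpen_gt {X : Type*} [NormedAddCommGroup X] [NormedSpace ℝ X]
    (g : X →L[ℝ] ℝ) (c : ℝ) : WeaklyOpen {x : X | c < g x} := by
  have hcont : Continuous fun y : WeakSpace ℝ X => g ((toWeakSpace ℝ X).symm y) :=
    WeakBilin.eval_continuous _ g
  have himg : (toWeakSpace ℝ X) '' {x | c < g x}
      = {y : WeakSpace ℝ X | c < g ((toWeakSpace ℝ X).symm y)} := by
    ext y
    constructor
    · rintro ⟨x, hx, rfl⟩; simpa using hx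
    · intro hy; exact ⟨(toWeakSpace ℝ X).symm y, hy, by simp⟩
  unfold WeaklyOpen
  rw [himg]
  exact isOpen_lt continuous_const hcont

/-- Stability principle for set optimization problems (Proposition 37). -/
theorem stability_principle {Z X : Type*} [NormedAddCommGroup Z] [NormedSpace ℝ Z]
    [NormedAddCommGroup X] [NormedSpace ℝ X]
    (K : Set X)
    (hK_closed : IsClosed K) (hK_conv : Convex ℝ K)
    (hK_cone : ∀ t : ℝ, 0 ≤ t → ∀ x ∈ K, t • x ∈ K)
    (hK_add : K + K ⊆ K) (hK_pointed : K ∩ (-K) = {0})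
    (hK_solid : (interior K).Nonempty)
    (F H : Z → Set X) (hF : ∀ z, (F z).Nonempty) (hH : ∀ z, (H z).Nonempty)
    (M : Set Z) (hM : M.Nonempty) (hMclosed : IsClosed M)
    (e : X) (he : e ∈ interior K)
    (μ L ε : ℝ) (hμ : 0 < μ) (hL : 0 < L ∧ L < μ) (hε : 0 < ε)
    (zb zε : Z) (hzb : zb ∈ M) (hzε : zε ∈ M)
    (h1 : ∀ z ∈ M, ¬ F zb ⊆ F z - {(μ * ‖z - zb‖) • e} + interior K)
    (h2 : ∀ z ∈ M, H z + {(L * ‖z - zb‖) • e} ⊆ H zb + K)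
    (h3 : ∀ z ∈ M, F z + H z ⊆ F zε + H zε - {ε • e} + K)
    (hFconv : Convex ℝ (F zε + K))
    (hHcomp : WeaklyKCompact K (H zb)) :
    ‖zε - zb‖ ≤ ε / (μ - L) := by
  set r : ℝ := ‖zε - zb‖ with hr
  have hμL : 0 < μ - L := by linarith [hL.2]
  rw [le_div_iff₀ hμL]
  -- 0 ∈ K
  have h0K : (0 : X) ∈ K := by
    obtain ⟨w, hw⟩ := hK_solid
    have := hK_cone 0 le_rfl w (interior_subset hw)
    simpa using this
  -- interior K is stable under adding elements of K
  have hIK : ∀ w ∈ interior K, ∀ k ∈ K, w + k ∈ interior K := by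
    have hsub : interior K + K ⊆ interior K := by
      have hopen : IsOpen (interior K + K) := isOpen_interior.add_right
      refine interior_maximal ?_ hopen
      exact (Set.add_subset_add_right interior_subset).trans hK_add
    intro w hw k hk
    exact hsub ⟨w, hw, k, hk, rfl⟩
  -- positive multiples of e stay in the interior of K
  have hte : ∀ t : ℝ, 0 < t → t • e ∈ interior K := by
    intro t ht
    have hopen : IsOpen (t • interior K) := isOpen_interior.smul₀ (ne_of_gt ht)
    have hsub : t • interior K ⊆ K := by
      rintro x ⟨y, hy, rfl⟩
      exact hK_cone t ht.le y (interior_subset hy)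
    exact interior_maximal hsub hopen (smul_mem_smul_set he)
  -- the witness point from (i) at z = zε
  obtain ⟨a, haF, haE⟩ := not_subset.mp (h1 zε hzε)
  set c : X := (μ * r) • e with hc
  -- the open convex set D = F zε + interior K
  set D : Set X := F zε + interior K with hD
  have hD_open : IsOpen D := IsOpen.add_left isOpen_interior
  have hD_eq : D = (F zε + K) + interior K := by
    apply Subset.antisymm
    · rintro x ⟨b, hb, w, hw, rfl⟩
      exact ⟨b + 0, ⟨b, hb, 0, h0K, rfl⟩, w, hw, by simp⟩
    · rintro x ⟨y, ⟨b, hb, k, hk, rfl⟩, w, hw, rfl⟩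
      exact ⟨b, hb, w + k, hIK w hw k hk, (add_left_comm b w k).trans (add_comm _ _)⟩
  have hD_conv : Convex ℝ D := by
    rw [hD_eq]
    exact hFconv.add hK_conv.interior
  -- a + c ∉ D
  have haD : a + c ∉ D := by
    rintro ⟨b, hb, w, hw, hbw⟩
    refine haE ⟨b - c, ⟨b, hb, c, rfl, rfl⟩, w, hw, ?_⟩
    have hbw' : b + w = a + c := hbw
    show b - c + w = a
    rw [sub_add_eq_add_sub, hbw', add_sub_cancel_right]
  -- separate a + c from D
  obtain ⟨g, hg⟩ := geometric_hahn_banach_point_open hD_conv hD_open haD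
  -- a base element of F zε
  obtain ⟨b₀, hb₀⟩ := hF zε
  -- g is nonnegative on K
  have hgK : ∀ k ∈ K, 0 ≤ g k := by
    intro k hk
    by_contra hneg
    push_neg at hneg
    set t : ℝ := (|g b₀ + g e - g (a + c)| + 1) / (-g k) with hts
    have ht : 0 ≤ t := div_nonneg (by positivity) (by linarith)
    have hmem : b₀ + (e + t • k) ∈ D := by
      rcases eq_or_lt_of_le ht with h | h
      · exact ⟨b₀, hb₀, e + t • k, by
          have : t • k ∈ K := hK_cone t ht k hk
          exact hIK e he _ this, rfl⟩
      · exact ⟨b₀, hb₀, e + t • k, hIK e he _ (hK_cone t ht k hk), rfl⟩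
    have hlt := hg _ hmem
    have hgt : g (b₀ + (e + t • k)) = g b₀ + g e + t * g k := by
      simp [map_add, map_smul]; ring
    have hknz : -g k ≠ 0 := ne_of_gt (by linarith)
    have htk0 : t * -g k = |g b₀ + g e - g (a + c)| + 1 := div_mul_cancel₀ _ hknz
    rw [mul_neg] at htk0
    have htk : t * g k = -(|g b₀ + g e - g (a + c)| + 1) := by linarith
    have habs := le_abs_self (g b₀ + g e - g (a + c))
    rw [hgt, htk] at hlt
    linarith
  -- g e > 0
  have hge : 0 < g e := by
    rcases lt_or_eq_of_le (hgK e (interior_subset he)) with h | h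
    · exact h
    -- if g e = 0, then g vanishes near e, hence everywhere; contradiction with strictness
    exfalso
    obtain ⟨δ, hδ, hball⟩ := Metric.isOpen_iff.mp isOpen_interior e he
    set x₀ : X := b₀ + e - (a + c) with hx₀
    have hgx₀ : 0 < g x₀ := by
      have hmem : b₀ + e ∈ D := ⟨b₀, hb₀, e, he, rfl⟩
      have := hg _ hmem
      have : g x₀ = g (b₀ + e) - g (a + c) := by simp [hx₀, map_add, map_sub]
      rw [this]
      linarith [hg _ hmem]
    set v : X := (δ / (2 * ‖x₀‖ + 1)) • x₀ with hv
    have hden : 0 < 2 * ‖x₀‖ + 1 := by positivity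
    have hvnorm : ‖v‖ < δ := by
      rw [hv, norm_smul, Real.norm_eq_abs, abs_of_pos (div_pos hδ hden)]
      rw [div_mul_eq_mul_div, div_lt_iff₀ hden]
      nlinarith [norm_nonneg x₀]
    have hmemK : e - v ∈ interior K := by
      apply hball
      simp [Metric.mem_ball, dist_eq_norm]
      simpa using hvnorm
    have hgev : 0 ≤ g (e - v) := hgK _ (interior_subset hmemK)
    have hgv : g v = (δ / (2 * ‖x₀‖ + 1)) * g x₀ := by simp [hv, map_smul]
    have hgvpos : 0 < g v := by
      rw [hgv]
      exact mul_pos (div_pos hδ hden) hgx₀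
    rw [map_sub, ← h] at hgev
    linarith
  -- every element of F zε has g-value at least g (a + c)
  have hFlb : ∀ b ∈ F zε, g (a + c) ≤ g b := by
    intro b hb
    apply le_of_forall_pos_lt_add
    intro η hη
    have ht : 0 < η / g e := div_pos hη hge
    have hmem : b + (η / g e) • e ∈ D := ⟨b, hb, (η / g e) • e, hte _ ht, rfl⟩
    have := hg _ hmem
    have heq : g (b + (η / g e) • e) = g b + η := by
      rw [map_add, map_smul, smul_eq_mul]
      field_simp
    rw [heq] at this
    exact this
  -- g is bounded below on H zb, using weak K-compactness
  have hbound : ∃ m₀ : ℝ, ∀ h ∈ H zb, m₀ ≤ g h := by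
    obtain ⟨t, ht⟩ := hHcomp (fun n : ULift ℕ => {x | -(n.down : ℝ) < g x})
      (fun n => weaklyOpen_gt g _)
      (by
        intro h hh
        obtain ⟨n, hn⟩ := exists_nat_gt (-(g h))
        refine mem_iUnion.mpr ⟨⟨n⟩, h, ?_, 0, h0K, by simp⟩
        simp only [mem_setOf_eq]
        linarith)
    refine ⟨-(t.sup (fun n => n.down) : ℕ), ?_⟩
    intro h hh
    have := ht hh
    simp only [mem_iUnion] at this
    obtain ⟨n, hnt, u, hu, k, hk, hsum⟩ := this
    have e1 : -(n.down : ℝ) < g u := hu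
    have e2 : 0 ≤ g k := hgK k hk
    have e3 : n.down ≤ t.sup (fun n => n.down) := Finset.le_sup hnt
    have e4 : g h = g u + g k := by rw [← hsum, map_add]
    have e5 : ((n.down : ℕ) : ℝ) ≤ ((t.sup (fun n => n.down) : ℕ) : ℝ) := Nat.cast_le.mpr e3
    linarith
  obtain ⟨m₀, hm₀⟩ := hbound
  -- the infimum of g over H zb
  set m : ℝ := sInf (g '' H zb) with hm
  have hbdd : BddBelow (g '' H zb) := ⟨m₀, by rintro x ⟨h, hh, rfl⟩; exact hm₀ h hh⟩
  have hne : (g '' H zb).Nonempty := (hH zb).image g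
  -- key step: every h ∈ H zb dominates some h'' ∈ H zb plus the gap
  set s : ℝ := ((μ - L) * r - ε) * g e with hs
  have hstep : ∀ h ∈ H zb, m + s ≤ g h := by
    intro h hh
    -- apply (iii) at zb to a + h
    have hmem3 : a + h ∈ F zε + H zε - {ε • e} + K :=
      h3 zb hzb ⟨a, haF, h, hh, rfl⟩
    obtain ⟨p, ⟨q, ⟨b, hb, h', hh', rfl⟩, y, hy, rfl⟩, k, hk, hsum⟩ := hmem3
    rw [mem_singleton_iff] at hy
    subst hy
    -- apply (ii) at zε to h' + (L * r) • e
    have hmem2 : h' + (L * r) • e ∈ H zb + K :=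
      h2 zε hzε ⟨h', hh', (L * r) • e, rfl, rfl⟩
    obtain ⟨h'', hh'', k', hk', hsum2⟩ := hmem2
    -- combine the g-values
    have e1 : g a + g h = g b + g h' - ε * g e + g k := by
      have := congrArg g hsum
      simp only [map_add, map_sub, map_smul, smul_eq_mul] at this
      linarith [this]
    have e2 : g h' + (L * r) * g e = g h'' + g k' := by
      have := congrArg g hsum2
      simp only [map_add, map_smul, smul_eq_mul] at this
      linarith [this]
    have e3 : g (a + c) ≤ g b := hFlb b hb
    have e4 : g (a + c) = g a + (μ * r) * g e := by
      simp [hc, map_add, map_smul]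
    have e5 : 0 ≤ g k := hgK k hk
    have e6 : 0 ≤ g k' := hgK k' hk'
    have e7 : m ≤ g h'' := csInf_le hbdd (mem_image_of_mem g hh'')
    have : g h ≥ g h'' + ((μ - L) * r - ε) * g e := by nlinarith
    rw [hs]
    linarith
  have hfinal : m + s ≤ m := le_csInf hne (by rintro x ⟨h, hh, rfl⟩; exact hstep h hh)
  have hsle : s ≤ 0 := by linarith
  rw [hs] at hsle
  nlinarith
end
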